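/- arXiv:2008.09217 — 10 statements merged into one kernel-verified Lean document; each statement's English description precedes it below -/
import Mathlib

section
/- Let n, m be positive natural numbers and let A be an n×n matrix, G an n×m matrix, and C an m×n matrix over ℂ, with C*G invertible. Then for every z ∈ ℂ, det(fromBlocks (z•1 - A) (-G) (C*A) (C*G)) = det(C*G) * det(z•1 - (1 - G*(C*G)⁻¹*C)*A). (Equivalently, the characteristic polynomial of the square zero-feedthrough SISE system matrix (I - G(CG)⁻¹C)A equals, up to the constant det(CG), the zero polynomial of the Rosenbrock system matrix of the transfer function zC(zI-A)⁻¹G = CG + CA(zI-A)⁻¹G.) -/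
open Matrix

/-- determinant form of Theorem 1 (square zero-feedthrough case):
the characteristic polynomial of `(I - G(CG)⁻¹C)A` equals, up to the constant
`det (CG)`, the zero polynomial of the Rosenbrock matrix of `zC(zI-A)⁻¹G`. -/
theorem sise_square_zero_feedthrough_det
    (n m : ℕ) (hn : 0 < n) (hm : 0 < m)
    (A : Matrix (Fin n) (Fin n) ℂ) (G : Matrix (Fin n) (Fin m) ℂ)
    (C : Matrix (Fin m) (Fin n) ℂ) (hCG : IsUnit (C * G)) :
    ∀ z : ℂ,
      (Matrix.fromBlocks (z • (1 : Matrix (Fin n) (Fin n) ℂ) - A) (-G) (C * A) (C * G)).det =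
        (C * G).det *
          (z • (1 : Matrix (Fin n) (Fin n) ℂ) - (1 - G * (C * G)⁻¹ * C) * A).det := by
  intro z
  obtain ⟨inv⟩ := hCG.nonempty_invertible
  rw [Matrix.det_fromBlocks₂₂, Matrix.invOf_eq_nonsing_inv]
  congr 2
  simp [Matrix.sub_mul, Matrix.mul_assoc, Matrix.neg_mul, sub_sub, sub_add]
end

section
/- Let A be an n×n matrix, G an n×m matrix, and C an m×n matrix over ℂ, with C*G invertible. Then every eigenvalue of (1 - G*(C*G)⁻¹*C)*A has modulus strictly less than 1 if and only if every z ∈ ℂ satisfying det(fromBlocks (z•1 - A) (-G) (C*A) (C*G)) = 0 has |z| < 1. (Theorem 1: the square zero-feedthrough SISE estimator is asymptotically stable if and only if all transmission zeros of zC(zI-A)⁻¹G lie inside the unit circle.) -/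
open Matrix

/-- Theorem 1: the square zero-feedthrough SISE estimator is
asymptotically stable iff all transmission zeros of `zC(zI-A)⁻¹G` lie strictly
inside the unit circle. -/
theorem sise_square_zero_feedthrough_stability
    (n m : ℕ)
    (A : Matrix (Fin n) (Fin n) ℂ) (G : Matrix (Fin n) (Fin m) ℂ)
    (C : Matrix (Fin m) (Fin n) ℂ) (hCG : IsUnit (C * G)) :
    (∀ z ∈ spectrum ℂ ((1 - G * (C * G)⁻¹ * C) * A), ‖z‖ < 1) ↔
      (∀ z : ℂ,
        (Matrix.fromBlocks (z • (1 : Matrix (Fin n) (Fin n) ℂ) - A) (-G)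
            (C * A) (C * G)).det = 0 → ‖z‖ < 1) := by
  haveI : Invertible (C * G) := hCG.invertible
  have hdetCG : (C * G).det ≠ 0 := by
    have := (Matrix.isUnit_iff_isUnit_det _).mp hCG
    exact this.ne_zero
  have key : ∀ z : ℂ,
      z ∈ spectrum ℂ ((1 - G * (C * G)⁻¹ * C) * A) ↔
      (Matrix.fromBlocks (z • (1 : Matrix (Fin n) (Fin n) ℂ) - A) (-G)
          (C * A) (C * G)).det = 0 := by
    intro z
    rw [Matrix.det_fromBlocks₂₂]
    have hinv : ⅟(C * G) = (C * G)⁻¹ := (invOf_eq_nonsing_inv _).trans rfl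
    have hblock : z • (1 : Matrix (Fin n) (Fin n) ℂ) - A - -G * ⅟(C * G) * (C * A)
        = z • (1 : Matrix (Fin n) (Fin n) ℂ) - (1 - G * (C * G)⁻¹ * C) * A := by
      rw [hinv, Matrix.sub_mul, Matrix.one_mul, Matrix.neg_mul, Matrix.neg_mul,
        sub_neg_eq_add, Matrix.mul_assoc (G * (C * G)⁻¹), Matrix.mul_assoc G (C*G)⁻¹ (C*A)]
      abel
    rw [hblock, mul_eq_zero, or_iff_right hdetCG]
    rw [spectrum.mem_iff, Matrix.isUnit_iff_isUnit_det, isUnit_iff_ne_zero, not_not]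
    congr! 2
    rw [Algebra.algebraMap_eq_smul_one]
  constructor
  · intro h z hz
    exact h z ((key z).mpr hz)
  · intro h z hz
    exact h z ((key z).mp hz)
end

section
/- Let A be an n×n matrix, G an n×m matrix, and C an m×n matrix over ℂ with C*G invertible, and set Π = G*(C*G)⁻¹*C. For every z ∈ ℂ such that both z•1 - A and z•1 - (1 - Π)*A are invertible, one has (z•1 - (1 - Π)*A)⁻¹ * (z•Π) * (z•1 - A)⁻¹ * G = (z•1 - A)⁻¹ * G. (Core identity in the proof of Theorem 1: the transfer function Ψ(z) from d to the SISE state estimate equals (zI-A)⁻¹G, so the estimator poles cancel the transmission zeros.) -/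
open Matrix

/-- core identity in the proof of Theorem 1: the transfer
function from `d` to the SISE state estimate equals `(zI - A)⁻¹ G`. -/
theorem sise_state_transfer_identity
    (n m : ℕ)
    (A : Matrix (Fin n) (Fin n) ℂ) (G : Matrix (Fin n) (Fin m) ℂ)
    (C : Matrix (Fin m) (Fin n) ℂ) (hCG : IsUnit (C * G)) :
    ∀ z : ℂ,
      IsUnit (z • (1 : Matrix (Fin n) (Fin n) ℂ) - A) →
      IsUnit (z • (1 : Matrix (Fin n) (Fin n) ℂ) - (1 - G * (C * G)⁻¹ * C) * A) →
      (z • (1 : Matrix (Fin n) (Fin n) ℂ) - (1 - G * (C * G)⁻¹ * C) * A)⁻¹ *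
          (z • (G * (C * G)⁻¹ * C)) *
          (z • (1 : Matrix (Fin n) (Fin n) ℂ) - A)⁻¹ * G =
        (z • (1 : Matrix (Fin n) (Fin n) ℂ) - A)⁻¹ * G := by
  intro z hN hM
  set P : Matrix (Fin n) (Fin n) ℂ := G * (C * G)⁻¹ * C with hP
  set N : Matrix (Fin n) (Fin n) ℂ := z • (1 : Matrix (Fin n) (Fin n) ℂ) - A with hNdef
  set M : Matrix (Fin n) (Fin n) ℂ := z • (1 : Matrix (Fin n) (Fin n) ℂ) - (1 - P) * A
    with hMdef
  have hNinv : N * N⁻¹ = 1 := Matrix.mul_nonsing_inv _ ((Matrix.isUnit_iff_isUnit_det N).mp hN)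
  have hMinv : M⁻¹ * M = 1 := Matrix.nonsing_inv_mul _ ((Matrix.isUnit_iff_isUnit_det M).mp hM)
  have hCGinv : (C * G)⁻¹ * (C * G) = 1 :=
    Matrix.nonsing_inv_mul _ ((Matrix.isUnit_iff_isUnit_det _).mp hCG)
  have hPG : P * G = G := by
    simp only [hP, Matrix.mul_assoc]
    rw [hCGinv, Matrix.mul_one]
  have hMN : M = N + P * A := by
    rw [hMdef, hNdef, sub_mul, Matrix.one_mul]; abel
  set X : Matrix (Fin n) (Fin m) ℂ := N⁻¹ * G with hX
  have hNX : N * X = G := by rw [hX, ← Matrix.mul_assoc, hNinv, Matrix.one_mul]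
  have hzX : z • X = G + A * X := by
    have : z • X = (z • (1 : Matrix (Fin n) (Fin n) ℂ)) * X := by
      rw [Matrix.smul_mul, Matrix.one_mul]
    rw [this, show z • (1 : Matrix (Fin n) (Fin n) ℂ) = N + A by rw [hNdef]; abel,
      Matrix.add_mul, hNX]
  have key : (z • P) * X = M * X := by
    rw [Matrix.smul_mul, ← Matrix.mul_smul, hzX, Matrix.mul_add, hPG,
      hMN, Matrix.add_mul, hNX, Matrix.mul_assoc]
    simp [hP, Matrix.mul_assoc]
  calc M⁻¹ * (z • P) * N⁻¹ * G = M⁻¹ * ((z • P) * X) := by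
        rw [hX, Matrix.mul_assoc, Matrix.mul_assoc]
    _ = M⁻¹ * (M * X) := by rw [key]
    _ = X := by rw [← Matrix.mul_assoc, hMinv, Matrix.one_mul]
end

section
/- Let A be an n×n matrix, G an n×m matrix, and C an m×n matrix over ℂ. For every z ∈ ℂ such that C*G, z•1 - A, and z•1 - A + G*(C*G)⁻¹*C*A are all invertible, the following two identities hold: (i) C*G + C*A*(z•1 - A)⁻¹*G = z • (C*(z•1 - A)⁻¹*G); (ii) (C*G + C*A*(z•1 - A)⁻¹*G) * ((C*G)⁻¹ - (C*G)⁻¹*C*A*(z•1 - A + G*(C*G)⁻¹*C*A)⁻¹*G*(C*G)⁻¹) = 1. (The SISE y-to-d̂ transfer function is the exact inverse of the d-to-y transfer function zC(zI-A)⁻¹G.) -/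
open Matrix

/-- the SISE `y`-to-`d̂` transfer function is the exact inverse of
the `d`-to-`y` transfer function `zC(zI-A)⁻¹G = CG + CA(zI-A)⁻¹G`. -/
theorem sise_input_estimator_inverts_plant
    (n m : ℕ)
    (A : Matrix (Fin n) (Fin n) ℂ) (G : Matrix (Fin n) (Fin m) ℂ)
    (C : Matrix (Fin m) (Fin n) ℂ) :
    ∀ z : ℂ,
      IsUnit (C * G) →
      IsUnit (z • (1 : Matrix (Fin n) (Fin n) ℂ) - A) →
      IsUnit (z • (1 : Matrix (Fin n) (Fin n) ℂ) - A + G * (C * G)⁻¹ * C * A) →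
      (C * G + C * A * (z • (1 : Matrix (Fin n) (Fin n) ℂ) - A)⁻¹ * G =
          z • (C * (z • (1 : Matrix (Fin n) (Fin n) ℂ) - A)⁻¹ * G)) ∧
      ((C * G + C * A * (z • (1 : Matrix (Fin n) (Fin n) ℂ) - A)⁻¹ * G) *
          ((C * G)⁻¹ -
            (C * G)⁻¹ * C * A *
              (z • (1 : Matrix (Fin n) (Fin n) ℂ) - A + G * (C * G)⁻¹ * C * A)⁻¹ *
              G * (C * G)⁻¹) = 1) := by
  intro z hS hM hN
  set M : Matrix (Fin n) (Fin n) ℂ := z • (1 : Matrix (Fin n) (Fin n) ℂ) - A with hMdef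
  set N : Matrix (Fin n) (Fin n) ℂ := M + G * (C * G)⁻¹ * C * A with hNdef
  have hSd := (Matrix.isUnit_iff_isUnit_det _).mp hS
  have hMd := (Matrix.isUnit_iff_isUnit_det _).mp hM
  have hNd := (Matrix.isUnit_iff_isUnit_det _).mp hN
  have hS1 : C * G * (C * G)⁻¹ = 1 := Matrix.mul_nonsing_inv _ hSd
  have hM1 : M * M⁻¹ = 1 := Matrix.mul_nonsing_inv _ hMd
  have hN1 : N * N⁻¹ = 1 := Matrix.mul_nonsing_inv _ hNd
  have hN2 : N⁻¹ * N = 1 := Matrix.nonsing_inv_mul _ hNd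
  have hMA : M + A = z • (1 : Matrix (Fin n) (Fin n) ℂ) := by
    rw [hMdef]; abel
  have e1 : C * (M + A) * M⁻¹ = C + C * A * M⁻¹ := by
    rw [Matrix.mul_add, Matrix.add_mul, Matrix.mul_assoc C M, hM1, Matrix.mul_one]
  have parti : C * G + C * A * M⁻¹ * G = z • (C * M⁻¹ * G) := by
    have : (C + C * A * M⁻¹) * G = C * (z • (1 : Matrix (Fin n) (Fin n) ℂ)) * M⁻¹ * G := by
      rw [← e1, hMA]
    rw [Matrix.add_mul] at this
    rw [this]
    rw [Matrix.mul_smul, Matrix.mul_one, Matrix.smul_mul, Matrix.smul_mul]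
  refine ⟨parti, ?_⟩
  -- key identity
  have key : M⁻¹ * G * (C * G)⁻¹ =
      N⁻¹ * G * (C * G)⁻¹ + M⁻¹ * G * (C * G)⁻¹ * C * A * (N⁻¹ * G * (C * G)⁻¹) := by
    have h2 : M⁻¹ * N = 1 + M⁻¹ * G * (C * G)⁻¹ * C * A := by
      rw [hNdef, Matrix.mul_add, Matrix.nonsing_inv_mul _ hMd]
      simp only [Matrix.mul_assoc]
    calc M⁻¹ * G * (C * G)⁻¹
        = M⁻¹ * (N * N⁻¹) * G * (C * G)⁻¹ := by rw [hN1, Matrix.mul_one]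
      _ = (M⁻¹ * N) * (N⁻¹ * G * (C * G)⁻¹) := by simp only [Matrix.mul_assoc]
      _ = N⁻¹ * G * (C * G)⁻¹ +
            M⁻¹ * G * (C * G)⁻¹ * C * A * (N⁻¹ * G * (C * G)⁻¹) := by
          rw [h2, Matrix.add_mul, Matrix.one_mul]
  have expand : (C * G + C * A * M⁻¹ * G) *
      ((C * G)⁻¹ - (C * G)⁻¹ * C * A * N⁻¹ * G * (C * G)⁻¹) =
      C * G * (C * G)⁻¹
      - C * G * ((C * G)⁻¹ * C * A * N⁻¹ * G * (C * G)⁻¹)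
      + C * A * (M⁻¹ * G * (C * G)⁻¹)
      - C * A * (M⁻¹ * G * ((C * G)⁻¹ * C * A * N⁻¹ * G * (C * G)⁻¹)) := by
    rw [Matrix.add_mul, Matrix.mul_sub, Matrix.mul_sub]
    simp only [Matrix.mul_assoc]
    abel
  rw [expand, hS1]
  have hcancel : C * G * ((C * G)⁻¹ * C * A * N⁻¹ * G * (C * G)⁻¹) =
      C * A * (N⁻¹ * G * (C * G)⁻¹) := by
    calc C * G * ((C * G)⁻¹ * C * A * N⁻¹ * G * (C * G)⁻¹)
        = C * G * (C * G)⁻¹ * (C * A * N⁻¹ * G * (C * G)⁻¹) := by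
          simp only [Matrix.mul_assoc]
      _ = C * A * (N⁻¹ * G * (C * G)⁻¹) := by
          rw [hS1, one_mul]; simp only [Matrix.mul_assoc]
  rw [hcancel]
  have : C * A * (M⁻¹ * G * (C * G)⁻¹) =
      C * A * (N⁻¹ * G * (C * G)⁻¹)
      + C * A * (M⁻¹ * G * ((C * G)⁻¹ * C * A * N⁻¹ * G * (C * G)⁻¹)) := by
    conv_lhs => rw [show M⁻¹ * G * (C * G)⁻¹ =
      N⁻¹ * G * (C * G)⁻¹ + M⁻¹ * G * (C * G)⁻¹ * C * A * (N⁻¹ * G * (C * G)⁻¹) from key]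
    rw [Matrix.mul_add]
    congr 1
    simp only [Matrix.mul_assoc]
  rw [this]
  abel
end

section
/- Let A be an n×n matrix, G an n×m matrix, C an m×n matrix, and H an m×m invertible matrix over ℂ. Then every eigenvalue of A - G*H⁻¹*C has modulus strictly less than 1 if and only if every z ∈ ℂ satisfying det(fromBlocks (z•1 - A) (-G) C H) = 0 has |z| < 1. (Theorem 3: the square full-feedthrough SISE estimator is asymptotically stable if and only if all transmission zeros of H + C(zI-A)⁻¹G lie inside the unit circle.) -/
open Matrix

/-- Theorem 3: the square full-feedthrough SISE estimator is
asymptotically stable iff all transmission zeros of `H + C(zI-A)⁻¹G` lie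
strictly inside the unit circle. -/
theorem sise_square_feedthrough_stability
    (n m : ℕ)
    (A : Matrix (Fin n) (Fin n) ℂ) (G : Matrix (Fin n) (Fin m) ℂ)
    (C : Matrix (Fin m) (Fin n) ℂ) (H : Matrix (Fin m) (Fin m) ℂ)
    (hH : IsUnit H) :
    (∀ z ∈ spectrum ℂ (A - G * H⁻¹ * C), ‖z‖ < 1) ↔
      (∀ z : ℂ,
        (Matrix.fromBlocks (z • (1 : Matrix (Fin n) (Fin n) ℂ) - A) (-G) C H).det = 0 →
          ‖z‖ < 1) := by
  haveI := hH.invertible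
  have key : ∀ z : ℂ,
      (Matrix.fromBlocks (z • (1 : Matrix (Fin n) (Fin n) ℂ) - A) (-G) C H).det = 0 ↔
      z ∈ spectrum ℂ (A - G * H⁻¹ * C) := by
    intro z
    rw [Matrix.det_fromBlocks₂₂]
    have hHdet : H.det ≠ 0 := by
      simpa using (Matrix.isUnit_iff_isUnit_det H).mp hH |>.ne_zero
    have hform : z • (1 : Matrix (Fin n) (Fin n) ℂ) - A - -G * H⁻¹ * C
        = z • (1 : Matrix (Fin n) (Fin n) ℂ) - (A - G * H⁻¹ * C) := by
      rw [Matrix.neg_mul, Matrix.neg_mul, sub_neg_eq_add, sub_add]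
    rw [Matrix.invOf_eq_nonsing_inv, hform, mul_eq_zero]
    constructor
    · rintro (h | h)
      · exact absurd h hHdet
      · rw [spectrum.mem_iff]
        intro hu
        rw [Matrix.isUnit_iff_isUnit_det] at hu
        have : (algebraMap ℂ (Matrix (Fin n) (Fin n) ℂ) z - (A - G * H⁻¹ * C))
            = z • (1 : Matrix (Fin n) (Fin n) ℂ) - (A - G * H⁻¹ * C) := by
          rw [Algebra.algebraMap_eq_smul_one]
        rw [this, h] at hu
        exact hu.ne_zero rfl
    · intro h
      right
      rw [spectrum.mem_iff] at h
      by_contra hd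
      apply h
      rw [Algebra.algebraMap_eq_smul_one, Matrix.isUnit_iff_isUnit_det]
      exact Ne.isUnit hd
  constructor
  · intro hs z hz
    exact hs z ((key z).mp hz)
  · intro hs z hz
    exact hs z ((key z).mpr hz)
end

section
/- Let G be an n×m real matrix, C an m×n real matrix with C*G invertible, and Y an m×m invertible matrix. Then Gᵀ*Cᵀ*Y*C*G is invertible and (Gᵀ*Cᵀ*Y*C*G)⁻¹ * Gᵀ*Cᵀ*Y = (C*G)⁻¹. (In the square case p = m, the SISE disturbance gain M_t = [GᵀCᵀ(CX_tCᵀ+R)⁻¹CG]⁻¹GᵀCᵀ(CX_tCᵀ+R)⁻¹ reduces to (CG)⁻¹, independent of X_t, Q and R.) -/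
open Matrix

/-- in the square case the SISE disturbance gain
`M = [GᵀCᵀYCG]⁻¹GᵀCᵀY` reduces to `(CG)⁻¹`, independent of `Y`. -/
theorem sise_square_gain_reduction
    (n m : ℕ)
    (G : Matrix (Fin n) (Fin m) ℝ) (C : Matrix (Fin m) (Fin n) ℝ)
    (Y : Matrix (Fin m) (Fin m) ℝ)
    (hCG : IsUnit (C * G)) (hY : IsUnit Y) :
    IsUnit (Gᵀ * Cᵀ * Y * C * G) ∧
      (Gᵀ * Cᵀ * Y * C * G)⁻¹ * (Gᵀ * Cᵀ * Y) = (C * G)⁻¹ := by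
  have hT : IsUnit (C * G)ᵀ := (Matrix.isUnit_transpose _).mpr hCG
  have hkey : Gᵀ * Cᵀ * Y * C * G = (C * G)ᵀ * Y * (C * G) := by
    rw [Matrix.transpose_mul, Matrix.mul_assoc]
  have hU : IsUnit (Gᵀ * Cᵀ * Y * C * G) := by
    rw [hkey]; exact (hT.mul hY).mul hCG
  refine ⟨hU, ?_⟩
  have h2 : Gᵀ * Cᵀ * Y = (C * G)ᵀ * Y := by rw [Matrix.transpose_mul]
  have hone : Y⁻¹ * (C * G)ᵀ⁻¹ * ((C * G)ᵀ * Y) = 1 := by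
    rw [Matrix.mul_assoc, ← Matrix.mul_assoc ((C * G)ᵀ⁻¹),
      Matrix.nonsing_inv_mul _ ((Matrix.isUnit_iff_isUnit_det _).mp hT), Matrix.one_mul,
      Matrix.nonsing_inv_mul _ ((Matrix.isUnit_iff_isUnit_det _).mp hY)]
  rw [hkey, h2, Matrix.mul_inv_rev, Matrix.mul_inv_rev, Matrix.mul_assoc, hone,
    Matrix.mul_one]
end

section
/- Let A, Q, X be n×n real matrices with X symmetric positive semidefinite; let G be n×m, C̄₁ m×n, C̄₂ q×n real matrices, H̄ an m×m invertible matrix; let R̄₁ (m×m) and R̄₂ (q×q) be symmetric positive definite. Stack C = [C̄₁; C̄₂], H = [H̄; 0] ((m+q)×m), and R = blockDiagonal(R̄₁, R̄₂). Then R̃ = C*X*Cᵀ + R is invertible; set M = (Hᵀ*R̃⁻¹*H)⁻¹*Hᵀ*R̃⁻¹ (well defined), K = X*Cᵀ*R̃⁻¹, and L = A*K - A*K*H*M + G*M. Then (A - L*C)*X*(A - L*C)ᵀ + L*R*Lᵀ + Q = Â*X*Âᵀ - Â*X*C̄₂ᵀ*(C̄₂*X*C̄₂ᵀ + R̄₂)⁻¹*C̄₂*X*Âᵀ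 + Q̂, where Â = A - G*H̄⁻¹*C̄₁ and Q̂ = Q + G*H̄⁻¹*R̄₁*(H̄⁻¹)ᵀ*Gᵀ. (Key identity in the proof of Theorem 4: the full-feedthrough SISE prediction covariance recursion is a Riccati difference equation.) -/
open Matrix

private lemma mul_cancel_left_one {l k : Type*} [Fintype l] [DecidableEq l] {P Q : Matrix l l ℝ}
    (h : P * Q = 1) (Y : Matrix l k ℝ) : P * (Q * Y) = Y := by
  rw [← Matrix.mul_assoc, h, Matrix.one_mul]

private lemma fromColumns_add_fromColumns {l k₁ k₂ : Type*}
    (A₁ : Matrix l k₁ ℝ) (A₂ : Matrix l k₂ ℝ) (B₁ : Matrix l k₁ ℝ) (B₂ : Matrix l k₂ ℝ) :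
    fromCols A₁ A₂ + fromCols B₁ B₂ = fromCols (A₁ + B₁) (A₂ + B₂) := by
  ext i (j | j) <;> simp [fromCols]

private lemma fromColumns_sub_fromColumns {l k₁ k₂ : Type*}
    (A₁ : Matrix l k₁ ℝ) (A₂ : Matrix l k₂ ℝ) (B₁ : Matrix l k₁ ℝ) (B₂ : Matrix l k₂ ℝ) :
    fromCols A₁ A₂ - fromCols B₁ B₂ = fromCols (A₁ - B₁) (A₂ - B₂) := by
  ext i (j | j) <;> simp [fromCols]

private lemma posDef_fromBlocks_diag {m q : ℕ} {R₁ : Matrix (Fin m) (Fin m) ℝ}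
    {R₂ : Matrix (Fin q) (Fin q) ℝ} (h₁ : R₁.PosDef) (h₂ : R₂.PosDef) :
    (fromBlocks R₁ 0 0 R₂).PosDef := by
  rw [posDef_iff_dotProduct_mulVec]
  constructor
  · show _ᴴ = _
    rw [fromBlocks_conjTranspose, h₁.1.eq, h₂.1.eq]
    simp
  · intro x hx
    have hre : star x ⬝ᵥ (fromBlocks R₁ 0 0 R₂) *ᵥ x =
        star (x ∘ Sum.inl) ⬝ᵥ R₁ *ᵥ (x ∘ Sum.inl) + star (x ∘ Sum.inr) ⬝ᵥ R₂ *ᵥ (x ∘ Sum.inr) := by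
      rw [fromBlocks_mulVec, dotProduct_block]
      simp [Function.comp_def]
    rw [hre]
    have hx' : x ∘ Sum.inl ≠ 0 ∨ x ∘ Sum.inr ≠ 0 := by
      by_contra hcon
      push_neg at hcon
      apply hx
      funext i
      cases i with
      | inl i => exact congrFun hcon.1 i
      | inr i => exact congrFun hcon.2 i
    rcases hx' with h | h
    · exact add_pos_of_pos_of_nonneg (h₁.dotProduct_mulVec_pos h) (h₂.posSemidef.dotProduct_mulVec_nonneg _)
    · exact add_pos_of_nonneg_of_pos (h₁.posSemidef.dotProduct_mulVec_nonneg _) (h₂.dotProduct_mulVec_pos h)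

/-- key identity in the proof of Theorem 4: the full-feedthrough
SISE prediction covariance recursion is a Riccati difference equation. -/
theorem sise_feedthrough_riccati
    (n m q : ℕ)
    (A Q X : Matrix (Fin n) (Fin n) ℝ)
    (hX : X.PosSemidef)
    (G : Matrix (Fin n) (Fin m) ℝ)
    (C₁ : Matrix (Fin m) (Fin n) ℝ) (C₂ : Matrix (Fin q) (Fin n) ℝ)
    (Hbar : Matrix (Fin m) (Fin m) ℝ) (hH : IsUnit Hbar)
    (R₁ : Matrix (Fin m) (Fin m) ℝ) (R₂ : Matrix (Fin q) (Fin q) ℝ)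
    (hR₁ : R₁.PosDef) (hR₂ : R₂.PosDef) :
    let C : Matrix (Fin m ⊕ Fin q) (Fin n) ℝ := Matrix.fromRows C₁ C₂
    let H : Matrix (Fin m ⊕ Fin q) (Fin m) ℝ := Matrix.fromRows Hbar 0
    let R : Matrix (Fin m ⊕ Fin q) (Fin m ⊕ Fin q) ℝ := Matrix.fromBlocks R₁ 0 0 R₂
    let Rtilde := C * X * Cᵀ + R
    IsUnit Rtilde ∧
      (IsUnit (Hᵀ * Rtilde⁻¹ * H) ∧
        (let M := (Hᵀ * Rtilde⁻¹ * H)⁻¹ * (Hᵀ * Rtilde⁻¹)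
         let K := X * Cᵀ * Rtilde⁻¹
         let L := A * K - A * K * H * M + G * M
         let Ahat := A - G * Hbar⁻¹ * C₁
         let Qhat := Q + G * Hbar⁻¹ * R₁ * (Hbar⁻¹)ᵀ * Gᵀ
         (A - L * C) * X * (A - L * C)ᵀ + L * R * Lᵀ + Q =
           Ahat * X * Ahatᵀ -
             Ahat * X * C₂ᵀ * (C₂ * X * C₂ᵀ + R₂)⁻¹ * (C₂ * X * Ahatᵀ) + Qhat)) := by
  intro C H R Rtilde
  have hCdef : C = Matrix.fromRows C₁ C₂ := rfl
  have hHdef : H = Matrix.fromRows Hbar 0 := rfl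
  have hRdef : R = Matrix.fromBlocks R₁ 0 0 R₂ := rfl
  have hRtdef : Rtilde = C * X * Cᵀ + R := rfl
  set d := C₂ * X * C₂ᵀ + R₂ with hd
  set b := C₁ * X * C₂ᵀ with hb
  set c := C₂ * X * C₁ᵀ with hc
  set a := C₁ * X * C₁ᵀ + R₁ with ha
  -- symmetry and psd facts
  have hXT : Xᵀ = X := by
    have := hX.1.eq
    rwa [Matrix.conjTranspose_eq_transpose_of_trivial] at this
  have psdC : (C * X * Cᵀ).PosSemidef := by
    have := hX.mul_mul_conjTranspose_same C
    rwa [Matrix.conjTranspose_eq_transpose_of_trivial] at this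
  have psdC2 : (C₂ * X * C₂ᵀ).PosSemidef := by
    have := hX.mul_mul_conjTranspose_same C₂
    rwa [Matrix.conjTranspose_eq_transpose_of_trivial] at this
  have hRP : R.PosDef := by rw [hRdef]; exact posDef_fromBlocks_diag hR₁ hR₂
  have hRtP : Rtilde.PosDef := by rw [hRtdef]; exact Matrix.PosDef.posSemidef_add psdC hRP
  have hdP : d.PosDef := by rw [hd]; exact Matrix.PosDef.posSemidef_add psdC2 hR₂
  have hdT : dᵀ = d := by
    have := hdP.1.eq
    rwa [Matrix.conjTranspose_eq_transpose_of_trivial] at this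
  have hdDet : IsUnit d.det := (Matrix.isUnit_iff_isUnit_det _).1 hdP.isUnit
  have hdd : d * d⁻¹ = 1 := Matrix.mul_nonsing_inv _ hdDet
  have hdd' : d⁻¹ * d = 1 := Matrix.nonsing_inv_mul _ hdDet
  have hdiT : (d⁻¹)ᵀ = d⁻¹ := by rw [Matrix.transpose_nonsing_inv, hdT]
  have hRtU : IsUnit Rtilde := hRtP.isUnit
  -- block form of Rtilde
  have hRt_blocks : Rtilde = Matrix.fromBlocks a b c d := by
    rw [hRtdef, hCdef, hRdef, ha, hb, hc, hd]
    rw [Matrix.fromRows_mul, Matrix.transpose_fromRows, Matrix.fromRows_mul_fromCols,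
      Matrix.fromBlocks_add, add_zero, add_zero]
  -- invertibility of the Schur complement
  letI iRt : Invertible Rtilde := hRtU.invertible
  letI iRtB : Invertible (Matrix.fromBlocks a b c d) := hRt_blocks ▸ iRt
  letI iD : Invertible d := hdP.isUnit.invertible
  letI iS0 : Invertible (a - b * ⅟d * c) := Matrix.invertibleOfFromBlocks₂₂Invertible a b c d
  set S := a - b * (d⁻¹ * c) with hS
  have hS0 : a - b * ⅟d * c = S := by rw [Matrix.invOf_eq_nonsing_inv, hS, Matrix.mul_assoc]
  letI iS : Invertible S := hS0 ▸ iS0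
  have hST : S * S⁻¹ = 1 := Matrix.mul_inv_of_invertible S
  have hTS : S⁻¹ * S = 1 := Matrix.inv_mul_of_invertible S
  -- explicit inverse of Rtilde
  have hRinv : Rtilde⁻¹ = Matrix.fromBlocks S⁻¹ (-(S⁻¹ * (b * d⁻¹))) (-(d⁻¹ * (c * S⁻¹)))
      (d⁻¹ + d⁻¹ * (c * (S⁻¹ * (b * d⁻¹)))) := by
    apply Matrix.inv_eq_right_inv
    rw [hRt_blocks, Matrix.fromBlocks_multiply]
    have e11 : a * S⁻¹ + b * -(d⁻¹ * (c * S⁻¹)) = 1 := by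
      have h : (a - b * (d⁻¹ * c)) * S⁻¹ = 1 := by rw [← hS]; exact hST
      rw [Matrix.sub_mul] at h
      simp only [Matrix.mul_assoc] at h
      rw [Matrix.mul_neg, ← sub_eq_add_neg]
      exact h
    have e12 : a * -(S⁻¹ * (b * d⁻¹)) + b * (d⁻¹ + d⁻¹ * (c * (S⁻¹ * (b * d⁻¹)))) = 0 := by
      have h : (a - b * (d⁻¹ * c)) * (S⁻¹ * (b * d⁻¹)) = b * d⁻¹ := by
        rw [← Matrix.mul_assoc, ← hS, hST, Matrix.one_mul]
      rw [Matrix.sub_mul] at h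
      simp only [Matrix.mul_assoc] at h
      rw [sub_eq_iff_eq_add] at h
      rw [Matrix.mul_neg, Matrix.mul_add, h]
      abel
    have e21 : c * S⁻¹ + d * -(d⁻¹ * (c * S⁻¹)) = 0 := by
      rw [Matrix.mul_neg, mul_cancel_left_one hdd (c * S⁻¹), add_neg_cancel]
    have e22 : c * -(S⁻¹ * (b * d⁻¹)) + d * (d⁻¹ + d⁻¹ * (c * (S⁻¹ * (b * d⁻¹)))) = 1 := by
      rw [Matrix.mul_neg, Matrix.mul_add, hdd, mul_cancel_left_one hdd]
      abel
    rw [e11, e12, e21, e22]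
    exact Matrix.fromBlocks_one
  -- Hbar facts
  have hHbarDet : IsUnit Hbar.det := (Matrix.isUnit_iff_isUnit_det _).1 hH
  have hHb : Hbar * Hbar⁻¹ = 1 := Matrix.mul_nonsing_inv _ hHbarDet
  have hbH : Hbar⁻¹ * Hbar = 1 := Matrix.nonsing_inv_mul _ hHbarDet
  have hHtDet : IsUnit (Hbarᵀ).det := by rwa [Matrix.det_transpose]
  have hHtU : IsUnit Hbarᵀ := (Matrix.isUnit_iff_isUnit_det _).2 hHtDet
  have hHbt : Hbarᵀ * (Hbarᵀ)⁻¹ = 1 := Matrix.mul_nonsing_inv _ hHtDet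
  have hbtH : (Hbarᵀ)⁻¹ * Hbarᵀ = 1 := Matrix.nonsing_inv_mul _ hHtDet
  have hHt : Hᵀ = Matrix.fromCols Hbarᵀ 0 := by
    rw [hHdef, Matrix.transpose_fromRows, Matrix.transpose_zero]
  have hHR : Hᵀ * Rtilde⁻¹ =
      Matrix.fromCols (Hbarᵀ * S⁻¹) (Hbarᵀ * -(S⁻¹ * (b * d⁻¹))) := by
    rw [hHt, hRinv, Matrix.fromCols_mul_fromBlocks]
    rw [Matrix.zero_mul, Matrix.zero_mul, add_zero, add_zero]
  have hHRH : Hᵀ * Rtilde⁻¹ * H = Hbarᵀ * (S⁻¹ * Hbar) := by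
    rw [hHR, hHdef, Matrix.fromCols_mul_fromRows, Matrix.mul_zero, add_zero, Matrix.mul_assoc]
  have hTU : IsUnit S⁻¹ := Matrix.isUnit_nonsing_inv_iff.2 (isUnit_of_invertible S)
  have hHRHU : IsUnit (Hᵀ * Rtilde⁻¹ * H) := by
    rw [hHRH]; exact hHtU.mul (hTU.mul hH)
  refine ⟨hRtU, hHRHU, ?_⟩
  intro M K L Ahat Qhat
  have hMdef : M = (Hᵀ * Rtilde⁻¹ * H)⁻¹ * (Hᵀ * Rtilde⁻¹) := rfl
  have hKdef : K = X * Cᵀ * Rtilde⁻¹ := rfl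
  have hLdef : L = A * K - A * K * H * M + G * M := rfl
  have hAdef : Ahat = A - G * Hbar⁻¹ * C₁ := rfl
  have hQdef : Qhat = Q + G * Hbar⁻¹ * R₁ * (Hbar⁻¹)ᵀ * Gᵀ := rfl
  have hWinv : (Hᵀ * Rtilde⁻¹ * H)⁻¹ = Hbar⁻¹ * (S * (Hbarᵀ)⁻¹) := by
    apply Matrix.inv_eq_right_inv
    rw [hHRH]
    simp only [Matrix.mul_assoc]
    rw [mul_cancel_left_one hHb, mul_cancel_left_one hTS, hHbt]
  have hM : M = Matrix.fromCols Hbar⁻¹ (-(Hbar⁻¹ * (b * d⁻¹))) := by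
    rw [hMdef, hWinv, hHR, Matrix.mul_fromCols, Matrix.fromCols_ext_iff]
    constructor
    · simp only [Matrix.mul_assoc]
      rw [mul_cancel_left_one hbtH, hST, Matrix.mul_one]
    · simp only [Matrix.mul_assoc, Matrix.mul_neg]
      rw [mul_cancel_left_one hbtH, mul_cancel_left_one hST]
  have hK : K = Matrix.fromCols
      (X * C₁ᵀ * S⁻¹ + X * C₂ᵀ * -(d⁻¹ * (c * S⁻¹)))
      (X * C₁ᵀ * -(S⁻¹ * (b * d⁻¹)) + X * C₂ᵀ * (d⁻¹ + d⁻¹ * (c * (S⁻¹ * (b * d⁻¹))))) := by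
    rw [hKdef, hCdef, Matrix.transpose_fromRows, Matrix.mul_fromCols, hRinv,
      Matrix.fromCols_mul_fromBlocks]
  have hKH : K * H = (X * C₁ᵀ * S⁻¹ + X * C₂ᵀ * -(d⁻¹ * (c * S⁻¹))) * Hbar := by
    rw [hK, hHdef, Matrix.fromCols_mul_fromRows, Matrix.mul_zero, add_zero]
  have hKHM : K * H * M = Matrix.fromCols
      (X * C₁ᵀ * S⁻¹ + X * C₂ᵀ * -(d⁻¹ * (c * S⁻¹)))
      (-((X * C₁ᵀ * S⁻¹ + X * C₂ᵀ * -(d⁻¹ * (c * S⁻¹))) * (b * d⁻¹))) := by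
    rw [hKH, hM, Matrix.mul_fromCols, Matrix.fromCols_ext_iff]
    constructor
    · rw [Matrix.mul_assoc, hHb, Matrix.mul_one]
    · rw [Matrix.mul_neg, Matrix.mul_assoc, mul_cancel_left_one hHb]
  have hKsub : K - K * H * M = Matrix.fromCols 0 (X * C₂ᵀ * d⁻¹) := by
    rw [hKHM, hK, fromColumns_sub_fromColumns, Matrix.fromCols_ext_iff]
    refine ⟨sub_self _, ?_⟩
    rw [sub_neg_eq_add]
    simp only [Matrix.add_mul, Matrix.mul_add, Matrix.mul_neg, Matrix.neg_mul, Matrix.mul_assoc]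
    abel
  have hL0 : L = A * (K - K * H * M) + G * M := by
    rw [hLdef]
    simp only [Matrix.mul_sub, Matrix.mul_assoc]
  have hL : L = Matrix.fromCols (G * Hbar⁻¹) (Ahat * (X * (C₂ᵀ * d⁻¹))) := by
    rw [hL0, hKsub, hM, Matrix.mul_fromCols, Matrix.mul_fromCols,
      fromColumns_add_fromColumns, Matrix.fromCols_ext_iff]
    constructor
    · rw [Matrix.mul_zero, zero_add]
    · rw [hAdef, hb]
      simp only [Matrix.sub_mul, Matrix.mul_neg, Matrix.mul_assoc, ← sub_eq_add_neg]
  have hLC : L * C = G * Hbar⁻¹ * C₁ + Ahat * (X * (C₂ᵀ * d⁻¹)) * C₂ := by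
    rw [hL, hCdef, Matrix.fromCols_mul_fromRows]
  have hGA : G * Hbar⁻¹ * C₁ = A - Ahat := by rw [hAdef]; abel
  have hALC : A - L * C = Ahat - Ahat * (X * (C₂ᵀ * d⁻¹)) * C₂ := by
    rw [hLC, hGA]; abel
  have hFt : (Ahat * (X * (C₂ᵀ * d⁻¹)))ᵀ = d⁻¹ * (C₂ * (X * Ahatᵀ)) := by
    simp only [Matrix.transpose_mul, Matrix.transpose_transpose, hXT, hdiT, Matrix.mul_assoc]
  have hLRL : L * R * Lᵀ = G * (Hbar⁻¹ * (R₁ * ((Hbar⁻¹)ᵀ * Gᵀ)))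
      + Ahat * (X * (C₂ᵀ * (d⁻¹ * (R₂ * (d⁻¹ * (C₂ * (X * Ahatᵀ))))))) := by
    rw [hL, hRdef, Matrix.fromCols_mul_fromBlocks, Matrix.transpose_fromCols,
      Matrix.fromCols_mul_fromRows, Matrix.mul_zero, Matrix.mul_zero, add_zero, zero_add]
    simp only [Matrix.transpose_mul, Matrix.transpose_transpose, hXT, hdiT, Matrix.mul_assoc]
  have hkey : ∀ Z : Matrix (Fin q) (Fin n) ℝ,
      Ahat * (X * (C₂ᵀ * (d⁻¹ * (C₂ * (X * (C₂ᵀ * Z)))))) + Ahat * (X * (C₂ᵀ * (d⁻¹ * (R₂ * Z))))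
        = Ahat * (X * (C₂ᵀ * Z)) := by
    intro Z
    have h1 : d * Z = C₂ * (X * (C₂ᵀ * Z)) + R₂ * Z := by
      rw [hd, Matrix.add_mul]
      simp only [Matrix.mul_assoc]
    have h0 : d⁻¹ * (C₂ * (X * (C₂ᵀ * Z)) + R₂ * Z) = Z := by
      rw [← h1]; exact mul_cancel_left_one hdd' Z
    calc Ahat * (X * (C₂ᵀ * (d⁻¹ * (C₂ * (X * (C₂ᵀ * Z)))))) + Ahat * (X * (C₂ᵀ * (d⁻¹ * (R₂ * Z))))
        = Ahat * (X * (C₂ᵀ * (d⁻¹ * (C₂ * (X * (C₂ᵀ * Z)) + R₂ * Z)))) := by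
          rw [Matrix.mul_add d⁻¹, Matrix.mul_add C₂ᵀ, Matrix.mul_add X, Matrix.mul_add Ahat]
      _ = Ahat * (X * (C₂ᵀ * Z)) := by rw [h0]
  rw [hALC, hLRL, hQdef, Matrix.transpose_sub, Matrix.transpose_mul, hFt]
  simp only [Matrix.sub_mul, Matrix.mul_sub, Matrix.mul_assoc]
  have hk := hkey (d⁻¹ * (C₂ * (X * Ahatᵀ)))
  rw [← hk]
  abel
end

section
/- Let A be an n×n complex matrix, B an n×k matrix, G an n×m matrix, C₁ an m×n matrix with C₁*G invertible, and S an m×m invertible matrix. Set Ā = A*(1 - G*(C₁*G)⁻¹*C₁) and B̄ = [B, A*G*(C₁*G)⁻¹*S] (the n×(k+m) matrix obtained by horizontal concatenation). If there exists a k×n matrix K such that every eigenvalue of A - B*K has modulus strictly less than 1, then there exists a (k+m)×n matrix K̄ such that every eigenvalue of Ā - B̄*K̄ has modulus strictly less than 1. (Stabilizability of [A, Q^{1/2}] implies stabilizability of [Ā, Q̄^{1/2}], as used in the proof of Theorem 2.) -/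
open Matrix

/-- stabilizability of `[A, B]` implies stabilizability of
`[Ā, B̄]` with `Ā = A(I - G(C₁G)⁻¹C₁)` and `B̄ = [B, AG(C₁G)⁻¹S]`, as used in
the proof of Theorem 2. -/
theorem sise_stabilizability_transfer
    (n m k : ℕ)
    (A : Matrix (Fin n) (Fin n) ℂ) (B : Matrix (Fin n) (Fin k) ℂ)
    (G : Matrix (Fin n) (Fin m) ℂ) (C₁ : Matrix (Fin m) (Fin n) ℂ)
    (hC₁G : IsUnit (C₁ * G))
    (S : Matrix (Fin m) (Fin m) ℂ) (hS : IsUnit S)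
    (hstab : ∃ K : Matrix (Fin k) (Fin n) ℂ,
      ∀ z ∈ spectrum ℂ (A - B * K), ‖z‖ < 1) :
    let Abar := A * (1 - G * (C₁ * G)⁻¹ * C₁)
    let Bbar : Matrix (Fin n) (Fin k ⊕ Fin m) ℂ :=
      Matrix.fromCols B (A * G * (C₁ * G)⁻¹ * S)
    ∃ Kbar : Matrix (Fin k ⊕ Fin m) (Fin n) ℂ,
      ∀ z ∈ spectrum ℂ (Abar - Bbar * Kbar), ‖z‖ < 1 := by
  intro Abar Bbar
  obtain ⟨K, hK⟩ := hstab
  refine ⟨Matrix.fromRows K (-(S⁻¹ * C₁)), ?_⟩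
  have hSinv : S * S⁻¹ = 1 := Matrix.mul_nonsing_inv S (Matrix.isUnit_iff_isUnit_det S |>.mp hS)
  have key : Abar - Bbar * Matrix.fromRows K (-(S⁻¹ * C₁)) = A - B * K := by
    show A * (1 - G * (C₁ * G)⁻¹ * C₁) -
      Matrix.fromCols B (A * G * (C₁ * G)⁻¹ * S) * Matrix.fromRows K (-(S⁻¹ * C₁)) = _
    rw [Matrix.fromCols_mul_fromRows]
    have : A * G * (C₁ * G)⁻¹ * S * -(S⁻¹ * C₁) = -(A * (G * (C₁ * G)⁻¹ * C₁)) := by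
      rw [Matrix.mul_neg]
      rw [show A * G * (C₁ * G)⁻¹ * S * (S⁻¹ * C₁)
          = A * G * (C₁ * G)⁻¹ * (S * S⁻¹) * C₁ by simp only [Matrix.mul_assoc]]
      rw [hSinv]
      simp [Matrix.mul_assoc]
    rw [this]
    rw [Matrix.mul_sub, Matrix.mul_one, Matrix.mul_assoc]
    abel
  rw [key]
  exact hK
end

section
/- Let A be an n×n complex matrix, G an n×m matrix; let C̄₁ be m×n and C̄₂ be q×n, stacked as C = [C̄₁; C̄₂]; let H̄ be an m×m invertible matrix and H = [H̄; 0]. If there exist matrices K = [K₁, K₂] (n×(m+q)) and M = [M₁, M₂] (m×(m+q)) with M₁*H̄ = 1 such that every eigenvalue of A - (A*K + (G - A*K*H)*M)*C has modulus strictly less than 1, then the pair [A - G*H̄⁻¹*C̄₁, C̄₂] is detectable, i.e. there exists an n×q matrix L such that every eigenvalue of A - G*H̄⁻¹*C̄₁ - L*C̄₂ has modulus strictly less than 1. (Necessity direction of Theorem 4: stability of full-feedthrough SISE requires detectability of [A - GH̄⁻¹C̄₁, C̄₂].) -/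
open Matrix

/-- necessity direction of Theorem 4: stability of the
full-feedthrough SISE recursion requires detectability of
`[A - GH̄⁻¹C̄₁, C̄₂]`. -/
theorem sise_feedthrough_stability_implies_detectability
    (n m q : ℕ)
    (A : Matrix (Fin n) (Fin n) ℂ) (G : Matrix (Fin n) (Fin m) ℂ)
    (C₁ : Matrix (Fin m) (Fin n) ℂ) (C₂ : Matrix (Fin q) (Fin n) ℂ)
    (Hbar : Matrix (Fin m) (Fin m) ℂ) (hH : IsUnit Hbar)
    (hstab : ∃ (K₁ : Matrix (Fin n) (Fin m) ℂ) (K₂ : Matrix (Fin n) (Fin q) ℂ)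
        (M₁ : Matrix (Fin m) (Fin m) ℂ) (M₂ : Matrix (Fin m) (Fin q) ℂ),
      M₁ * Hbar = 1 ∧
        (∀ z ∈ spectrum ℂ
            (A - (A * Matrix.fromCols K₁ K₂ +
                (G - A * Matrix.fromCols K₁ K₂ *
                    (Matrix.fromRows Hbar 0 : Matrix (Fin m ⊕ Fin q) (Fin m) ℂ)) *
                  Matrix.fromCols M₁ M₂) *
              (Matrix.fromRows C₁ C₂ : Matrix (Fin m ⊕ Fin q) (Fin n) ℂ)),
          ‖z‖ < 1)) :
    ∃ L : Matrix (Fin n) (Fin q) ℂ,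
      ∀ z ∈ spectrum ℂ (A - G * Hbar⁻¹ * C₁ - L * C₂), ‖z‖ < 1 := by
  obtain ⟨K₁, K₂, M₁, M₂, hM₁, hspec⟩ := hstab
  have hinv : Hbar⁻¹ = M₁ := Matrix.inv_eq_left_inv hM₁
  have hHM : Hbar * M₁ = 1 := by
    rwa [mul_eq_one_comm] at hM₁
  refine ⟨A * K₂ + (G - A * K₁ * Hbar) * M₂, ?_⟩
  intro z hz
  apply hspec
  have hKH : Matrix.fromCols K₁ K₂ *
      (Matrix.fromRows Hbar 0 : Matrix (Fin m ⊕ Fin q) (Fin m) ℂ) = K₁ * Hbar := by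
    rw [Matrix.fromCols_mul_fromRows, Matrix.mul_zero, add_zero]
  have key : A - (A * Matrix.fromCols K₁ K₂ +
        (G - A * Matrix.fromCols K₁ K₂ *
            (Matrix.fromRows Hbar 0 : Matrix (Fin m ⊕ Fin q) (Fin m) ℂ)) *
          Matrix.fromCols M₁ M₂) *
      (Matrix.fromRows C₁ C₂ : Matrix (Fin m ⊕ Fin q) (Fin n) ℂ)
      = A - G * Hbar⁻¹ * C₁ - (A * K₂ + (G - A * K₁ * Hbar) * M₂) * C₂ := by
    rw [Matrix.mul_assoc A (Matrix.fromCols K₁ K₂), hKH, hinv]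
    have hsum : A * Matrix.fromCols K₁ K₂ + (G - A * (K₁ * Hbar)) * Matrix.fromCols M₁ M₂
        = Matrix.fromCols (A * K₁ + (G - A * (K₁ * Hbar)) * M₁)
            (A * K₂ + (G - A * (K₁ * Hbar)) * M₂) := by
      rw [Matrix.mul_fromCols, Matrix.mul_fromCols]
      ext i j
      cases j <;> simp [Matrix.fromCols]
    have h1 : A * K₁ + (G - A * (K₁ * Hbar)) * M₁ = G * M₁ := by
      rw [Matrix.sub_mul, Matrix.mul_assoc A (K₁ * Hbar) M₁, Matrix.mul_assoc K₁ Hbar M₁, hHM,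
        Matrix.mul_one]
      abel
    rw [hsum, h1, Matrix.fromCols_mul_fromRows, Matrix.mul_assoc A K₁ Hbar,
      sub_add_eq_sub_sub]
  rw [← key] at hz
  exact hz
end

section
/- Let A be an n×n matrix, G an n×m matrix, and C an m×n matrix over ℂ with C*G invertible. Then for every z ∈ ℂ, z is an eigenvalue of (1 - G*(C*G)⁻¹*C)*A if and only if det(fromBlocks (z•1 - A) (-G) (C*A) (C*G)) = 0. (Theorem 1, eigenvalue form: the eigenvalues of the square zero-feedthrough SISE system matrix are exactly the transmission zeros of zC(zI-A)⁻¹G.) -/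
open Matrix

/-- Theorem 1, eigenvalue form: the eigenvalues of the square
zero-feedthrough SISE system matrix `(I - G(CG)⁻¹C)A` are exactly the
transmission zeros of `zC(zI-A)⁻¹G`. -/
theorem sise_square_zero_feedthrough_eigenvalues
    (n m : ℕ)
    (A : Matrix (Fin n) (Fin n) ℂ) (G : Matrix (Fin n) (Fin m) ℂ)
    (C : Matrix (Fin m) (Fin n) ℂ) (hCG : IsUnit (C * G)) :
    ∀ z : ℂ,
      z ∈ spectrum ℂ ((1 - G * (C * G)⁻¹ * C) * A) ↔
        (Matrix.fromBlocks (z • (1 : Matrix (Fin n) (Fin n) ℂ) - A) (-G)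
            (C * A) (C * G)).det = 0 := by
  intro z
  letI := hCG.invertible
  rw [Matrix.det_fromBlocks₂₂, Matrix.invOf_eq_nonsing_inv,
    spectrum.mem_iff, Algebra.algebraMap_eq_smul_one, Matrix.isUnit_iff_isUnit_det]
  have hd : ((C * G).det : ℂ) ≠ 0 := by
    simpa [isUnit_iff_ne_zero] using hCG.map Matrix.detMonoidHom
  have heq : z • (1 : Matrix (Fin n) (Fin n) ℂ) - A - -G * (C * G)⁻¹ * (C * A)
      = z • 1 - (1 - G * (C * G)⁻¹ * C) * A := by
    simp only [sub_mul, one_mul, Matrix.neg_mul, Matrix.mul_assoc, sub_neg_eq_add, sub_sub]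
    abel
  rw [heq]
  simp [isUnit_iff_ne_zero, hd, not_not]
end
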